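/- arXiv:cs/0003021 — 5 statements merged into one kernel-verified Lean document; each statement's English description precedes it below -/
import Mathlib

section
/- The relation R_l satisfies Epstein's conditions R1, R3 and R6, and satisfies R4 for contingent formulas: (i) L_{¬α} = L_α, hence R_l(α,β) iff R_l(¬α,β); (ii) R_l(α,β) iff R_l(β,α); (iii) if R_l(α,β) and β ⇔ β' then R_l(α,β'); (iv) if α is neither a tautology nor a contradiction then R_l(α,α). -/
namespace BeliefSeq

/-- Propositional formulas over a type `ν` of propositional variables,
with connectives ¬, ∧, ∨, →, ↔ and constants true, false. -/
inductive PropForm (ν : Type) : Type where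
  | var : ν → PropForm ν
  | tru : PropForm ν
  | fls : PropForm ν
  | neg : PropForm ν → PropForm ν
  | conj : PropForm ν → PropForm ν → PropForm ν
  | disj : PropForm ν → PropForm ν → PropForm ν
  | impl : PropForm ν → PropForm ν → PropForm ν
  | biim : PropForm ν → PropForm ν → PropForm ν

namespace PropForm

variable {ν : Type}

/-- Classical (two-valued) evaluation of a formula under a valuation. -/
def eval (v : ν → Bool) : PropForm ν → Bool
  | var x => v x
  | tru => true
  | fls => false
  | neg φ => !(φ.eval v)
  | conj φ ψ => φ.eval v && ψ.eval v
  | disj φ ψ => φ.eval v || ψ.eval v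
  | impl φ ψ => !(φ.eval v) || ψ.eval v
  | biim φ ψ => φ.eval v == ψ.eval v

/-- The set `L(α)` of variables occurring syntactically in a formula. -/
def vars : PropForm ν → Set ν
  | var x => {x}
  | tru => ∅
  | fls => ∅
  | neg φ => φ.vars
  | conj φ ψ => φ.vars ∪ ψ.vars
  | disj φ ψ => φ.vars ∪ ψ.vars
  | impl φ ψ => φ.vars ∪ ψ.vars
  | biim φ ψ => φ.vars ∪ ψ.vars

end PropForm

variable {ν : Type}

/-- `α ⇔ β` : logical equivalence (α ↔ β is a tautology). -/
def Equiv (α β : PropForm ν) : Prop := ∀ v, α.eval v = β.eval v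

def Tautology (α : PropForm ν) : Prop := ∀ v, α.eval v = true

def Contradiction (α : PropForm ν) : Prop := ∀ v, α.eval v = false

/-- Classical consequence `Γ ⊢ γ`. -/
def Entails (Γ : Set (PropForm ν)) (γ : PropForm ν) : Prop :=
  ∀ v, (∀ φ ∈ Γ, φ.eval v = true) → γ.eval v = true

/-- Consistency (satisfiability) of a set of formulas. -/
def Satisfiable (Γ : Set (PropForm ν)) : Prop :=
  ∃ v, ∀ φ ∈ Γ, φ.eval v = true

/-- `V` expresses `α`: α is logically equivalent to some formula
all of whose variables lie in `V`. -/
def Expresses (V : Set ν) (α : PropForm ν) : Prop :=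
  ∃ β : PropForm ν, Equiv α β ∧ β.vars ⊆ V

/-- `L_α` : the smallest language of `α` (intersection of all sets of
variables expressing `α`). -/
def Lang (α : PropForm ν) : Set ν := ⋂₀ {V : Set ν | Expresses V α}

/-- Direct relevance (`0`-relevance): logical language overlap `L_α ∩ L_β ≠ ∅`. -/
def DirectRel (α β : PropForm ν) : Prop := (Lang α ∩ Lang β).Nonempty

/-- `k`-relevance of `α`, `β` w.r.t. the belief sequence `σ`:
there is a chain `χ_1, …, χ_k` of formulas of `σ` with
`α, χ₁` directly relevant, each `χ_i, χ_{i+1}` directly relevant,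
and `χ_k, β` directly relevant (for `k = 0` this is direct relevance). -/
def KRel (k : ℕ) (α β : PropForm ν) (σ : List (PropForm ν)) : Prop :=
  ∃ l : List (PropForm ν), l.length = k ∧ (∀ χ ∈ l, χ ∈ σ) ∧
    List.Chain' DirectRel (α :: (l ++ [β]))

/-- `rel(α,β,σ)` : the least `k` such that `α, β` are `k`-relevant w.r.t. `σ`
(`∞ = ⊤` if they are irrelevant). -/
noncomputable def relDeg (α β : PropForm ν) (σ : List (PropForm ν)) : ℕ∞ :=
  sInf {n : ℕ∞ | ∃ k : ℕ, n = (k : ℕ∞) ∧ KRel k α β σ}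

open Classical in
/-- The priority ordering imposed by the query `γ` on the (indexed) entries of `σ`:
more relevant first; among equally relevant entries, more recent
(larger index) first. -/
noncomputable def priority (γ : PropForm ν) (σ : List (PropForm ν)) :
    (ℕ × PropForm ν) → (ℕ × PropForm ν) → Bool :=
  fun a b =>
    decide (relDeg γ a.2 σ < relDeg γ b.2 σ ∨
      (relDeg γ a.2 σ = relDeg γ b.2 σ ∧ b.1 ≤ a.1))

/-- The entries `δ_1, …, δ_n` of `σ` reordered by the priority above. -/
noncomputable def prioritized (γ : PropForm ν) (σ : List (PropForm ν)) :
    List (PropForm ν) :=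
  ((σ.zipIdx.map Prod.swap).mergeSort (priority γ σ)).map Prod.snd

open Classical in
/-- The prioritized maxiconsistent set `Γ_{⟨σ,k,γ⟩}` : go through `δ_1, …, δ_n`
in priority order, skipping `δ_{i+1}` if `Γ^i ⊢ ¬δ_{i+1}` or `δ_{i+1}` is not
`k`-relevant to `γ` w.r.t. `σ`, and adding it otherwise. -/
noncomputable def Gamma (σ : List (PropForm ν)) (k : ℕ) (γ : PropForm ν) :
    Set (PropForm ν) :=
  (prioritized γ σ).foldl
    (fun Γ δ =>
      if Entails Γ (PropForm.neg δ) ∨ (k : ℕ∞) < relDeg γ δ σ then Γ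
      else insert δ Γ) ∅

/-- `σ ⊢_k γ` iff `Γ_{⟨σ,k,γ⟩} ⊢ γ`. -/
def InferK (σ : List (PropForm ν)) (k : ℕ) (γ : PropForm ν) : Prop :=
  Entails (Gamma σ k γ) γ

/-- `C_k(σ) = {γ | σ ⊢_k γ}`. -/
def Ck (σ : List (PropForm ν)) (k : ℕ) : Set (PropForm ν) :=
  {γ | InferK σ k γ}

/-- Revision `σ * γ` : concatenation of `γ` at the (most recent) end of `σ`. -/
def revise (σ : List (PropForm ν)) (γ : PropForm ν) : List (PropForm ν) :=
  σ ++ [γ]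



/-!
A variable `x` lies in `L_α` as soon as flipping `x` alone can change the value of `α`: every
set expressing `α` makes `α` depend only on its own variables, so it must contain `x`.
A contingent formula has such a variable. Otherwise `α`, which depends only on its finitely
many syntactic variables, could be made independent of them one at a time (a function
depending only on `s` and only on `t` depends only on `s ∩ t`), hence would be constant.
The remaining clauses hold because `L_α` is defined from the truth table of `α` alone, which
is the same for `¬α` up to negation and the same for equivalent formulas.
-/

section DependsOn

variable {ι β : Type*} {α : ι → Type*} {f : (Π i, α i) → β}

theorem _root_.DependsOn.inter {s t : Set ι} (hs : DependsOn f s) (ht : DependsOn f t) :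
    DependsOn f (s ∩ t) := by
  classical
  intro x y hxy
  calc f x = f (s.piecewise x y) := hs fun i hi => (Set.piecewise_eq_of_mem s x y hi).symm
    _ = f y := ht fun i hi => by
      by_cases his : i ∈ s
      · rw [Set.piecewise_eq_of_mem s x y his, hxy i ⟨his, hi⟩]
      · rw [Set.piecewise_eq_of_notMem s x y his]

theorem _root_.DependsOn.diff_of_finite {s t : Set ι} (hf : DependsOn f s) (ht : t.Finite)
    (h : ∀ i ∈ t, DependsOn f {i}ᶜ) : DependsOn f (s \ t) := by
  induction t, ht using Set.Finite.induction_on with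
  | empty => simpa using hf
  | @insert a t _ _ ih =>
    rw [Set.insert_eq, Set.union_comm, ← Set.sdiff_sdiff, Set.sdiff_eq]
    exact (ih fun i hi => h i (Set.mem_insert_of_mem a hi)).inter (h a (Set.mem_insert a t))

end DependsOn

namespace PropForm

theorem vars_finite (α : PropForm ν) : α.vars.Finite := by
  induction α <;> simp_all [vars]

theorem eval_dependsOn_vars (α : PropForm ν) : DependsOn (fun v => α.eval v) α.vars := by
  intro v w hvw
  induction α with
  | var x => exact hvw x rfl
  | tru | fls => rfl
  | neg φ ih => simp only [eval, ih hvw]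
  | conj φ ψ ihφ ihψ | disj φ ψ ihφ ihψ | impl φ ψ ihφ ihψ | biim φ ψ ihφ ihψ =>
    simp only [eval, ihφ fun x hx => hvw x (Or.inl hx), ihψ fun x hx => hvw x (Or.inr hx)]

end PropForm

theorem Expresses.dependsOn {V : Set ν} {α : PropForm ν} (h : Expresses V α) :
    DependsOn (fun v => α.eval v) V := by
  obtain ⟨β, hαβ, hβV⟩ := h
  intro v w hvw
  simp only [hαβ v, hαβ w]
  exact β.eval_dependsOn_vars fun x hx => hvw x (hβV hx)

theorem mem_lang_of_not_dependsOn {α : PropForm ν} {x : ν}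
    (h : ¬ DependsOn (fun v => α.eval v) {x}ᶜ) : x ∈ Lang α := fun V hV => by
  by_contra hx
  exact h (Expresses.dependsOn hV |>.mono (Set.subset_compl_singleton_iff.mpr hx))

theorem lang_nonempty_of_contingent {α : PropForm ν} (hT : ¬ Tautology α)
    (hC : ¬ Contradiction α) : (Lang α).Nonempty := by
  by_contra hempty
  have hindep : ∀ x, DependsOn (fun v => α.eval v) {x}ᶜ := fun x => by
    by_contra hx
    exact hempty ⟨x, mem_lang_of_not_dependsOn hx⟩
  have hconst : DependsOn (fun v => α.eval v) ∅ := by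
    simpa using α.eval_dependsOn_vars.diff_of_finite α.vars_finite fun x _ => hindep x
  obtain ⟨v, hv⟩ : ∃ v, α.eval v = false := by simpa [Tautology] using hT
  obtain ⟨w, hw⟩ : ∃ w, α.eval w = true := by simpa [Contradiction] using hC
  simpa [hv, hw] using hconst.empty v w

theorem expresses_neg_iff {V : Set ν} {α : PropForm ν} :
    Expresses V (PropForm.neg α) ↔ Expresses V α := by
  constructor <;> rintro ⟨β, hβ, hβV⟩ <;> refine ⟨PropForm.neg β, fun v => ?_, hβV⟩
  · simpa [PropForm.eval] using hβ v
  · simp [PropForm.eval, hβ v]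

theorem lang_neg (α : PropForm ν) : Lang (PropForm.neg α) = Lang α := by
  simp only [Lang, expresses_neg_iff]

theorem expresses_congr {V : Set ν} {α α' : PropForm ν} (h : Equiv α α') :
    Expresses V α ↔ Expresses V α' := by
  constructor <;> rintro ⟨β, hβ, hβV⟩
  · exact ⟨β, fun v => (h v).symm.trans (hβ v), hβV⟩
  · exact ⟨β, fun v => (h v).trans (hβ v), hβV⟩

theorem lang_congr {α α' : PropForm ν} (h : Equiv α α') : Lang α = Lang α' := by
  simp only [Lang, expresses_congr h]

theorem directRel_neg_left_iff {α β : PropForm ν} :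
    DirectRel (PropForm.neg α) β ↔ DirectRel α β := by
  rw [DirectRel, DirectRel, lang_neg]

theorem directRel_comm {α β : PropForm ν} : DirectRel α β ↔ DirectRel β α := by
  rw [DirectRel, DirectRel, Set.inter_comm]

theorem DirectRel.congr_right {α β β' : PropForm ν} (h : DirectRel α β) (hβ : Equiv β β') :
    DirectRel α β' := by
  rwa [DirectRel, ← lang_congr hβ]

theorem directRel_self_of_contingent {α : PropForm ν} (hT : ¬ Tautology α)
    (hC : ¬ Contradiction α) : DirectRel α α := by
  simpa [DirectRel] using lang_nonempty_of_contingent hT hC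

/-- `R_l` satisfies Epstein's R1, R3, R6, and R4 for contingent
formulas: (i) `L_¬α = L_α`, hence `R_l(α,β) ↔ R_l(¬α,β)`; (ii) symmetry;
(iii) invariance under logical equivalence in the second argument;
(iv) reflexivity for formulas that are neither tautologies nor contradictions. -/
theorem Rl_satisfies_R1_R3_R6_and_contingent_R4 {ν : Type} :
    (∀ α β : PropForm ν,
      Lang (PropForm.neg α) = Lang α ∧ (DirectRel α β ↔ DirectRel (PropForm.neg α) β)) ∧
    (∀ α β : PropForm ν, DirectRel α β ↔ DirectRel β α) ∧
    (∀ α β β' : PropForm ν, DirectRel α β → Equiv β β' → DirectRel α β') ∧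
    (∀ α : PropForm ν, ¬ Tautology α → ¬ Contradiction α → DirectRel α α) :=
  ⟨fun α _ => ⟨lang_neg α, directRel_neg_left_iff.symm⟩, fun _ _ => directRel_comm,
    fun _ _ _ => DirectRel.congr_right, fun _ => directRel_self_of_contingent⟩

end BeliefSeq
end

section
/- The relation R_l satisfies condition R5a (half of Epstein's R5): for all propositional formulas α, β, γ, if R_l(α, β→γ) then R_l(α,β) or R_l(α,γ). -/
namespace BeliefSeq

variable {ν : Type}

namespace Equiv

theorem impl {β β' γ γ' : PropForm ν} (hβ : Equiv β β') (hγ : Equiv γ γ') :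
    Equiv (PropForm.impl β γ) (PropForm.impl β' γ') := fun v => by
  simp only [PropForm.eval, hβ v, hγ v]

end Equiv

theorem Expresses.impl {V W : Set ν} {β γ : PropForm ν} (hβ : Expresses V β)
    (hγ : Expresses W γ) : Expresses (V ∪ W) (PropForm.impl β γ) := by
  obtain ⟨β', hββ', hβ'V⟩ := hβ
  obtain ⟨γ', hγγ', hγ'W⟩ := hγ
  exact ⟨PropForm.impl β' γ', hββ'.impl hγγ', Set.union_subset_union hβ'V hγ'W⟩

theorem Lang_impl_subset (β γ : PropForm ν) :
    Lang (PropForm.impl β γ) ⊆ Lang β ∪ Lang γ := by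
  -- `L_β ∪ L_γ` is the intersection of the unions `V ∪ W`, and each of these expresses `β → γ`.
  unfold Lang
  rw [Set.sInter_union_sInter]
  exact Set.subset_iInter₂ fun p ⟨hp₁, hp₂⟩ =>
    Set.sInter_subset_of_mem (Expresses.impl hp₁ hp₂)

/-- `R_l` satisfies R5a: if `R_l(α, β→γ)` then `R_l(α,β)` or `R_l(α,γ)`. -/
theorem Rl_satisfies_R5a {ν : Type} (α β γ : PropForm ν)
    (h : DirectRel α (PropForm.impl β γ)) :
    DirectRel α β ∨ DirectRel α γ := by
  have hsub : Lang α ∩ Lang (PropForm.impl β γ) ⊆ Lang α ∩ Lang β ∪ Lang α ∩ Lang γ :=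
    Set.inter_union_distrib_left _ _ _ ▸
      Set.inter_subset_inter_right _ (Lang_impl_subset β γ)
  exact Set.union_nonempty.mp (h.mono hsub)

end BeliefSeq
end

section
/- Epstein's condition R2 is incompatible with the equivalence-invariance condition R6: any binary relation R on propositional formulas satisfying R1, R2, R3, R4 and R6 is the total relation, i.e., R(α,β) holds for every pair of formulas α, β. Consequently no relation that fails to relate some pair of formulas can satisfy R1, R2, R3, R4 and R6 simultaneously. -/
namespace BeliefSeq

variable {ν : Type}

namespace PropForm

theorem equiv_conj_self (α : PropForm ν) : Equiv (conj α α) α := fun v => by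
  simp [eval]

theorem equiv_impl_self (α β : PropForm ν) : Equiv (impl α α) (impl β β) := fun v => by
  simp [eval]

/-- `α ⇔ α ∧ α`, which is exchanged with the tautology `α → α`, and all tautologies are
equivalent. -/
theorem forall_of_conj_iff_impl {P : PropForm ν → Prop}
    (hconj : ∀ β γ, P (conj β γ) ↔ P (impl β γ)) (hequiv : ∀ β β', P β → Equiv β β' → P β')
    {α : PropForm ν} (hα : P α) (β : PropForm ν) : P β := by
  have hαα : P (conj α α) := hequiv _ _ hα fun v => ((equiv_conj_self α) v).symm
  have hββ : P (impl β β) := hequiv _ _ ((hconj α α).mp hαα) (equiv_impl_self α β)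
  exact hequiv _ _ ((hconj β β).mpr hββ) (equiv_conj_self β)

end PropForm

theorem R2_incompatible_with_R6_general {ν : Type} (R : PropForm ν → PropForm ν → Prop)
    (hR2 : ∀ α β γ, R α (PropForm.conj β γ) ↔ R α (PropForm.impl β γ))
    (hR4 : ∀ α, R α α)
    (hR6 : ∀ α β β', R α β → Equiv β β' → R α β') :
    ∀ α β, R α β := fun α =>
  PropForm.forall_of_conj_iff_impl (hR2 α) (hR6 α) (hR4 α)

/-- Epstein's R2 is incompatible with R6: any binary relation on
formulas satisfying R1, R2, R3, R4 and R6 is the total relation. -/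
theorem R2_incompatible_with_R6 {ν : Type} (R : PropForm ν → PropForm ν → Prop)
    (hR1 : ∀ α β, R α β ↔ R (PropForm.neg α) β)
    (hR2 : ∀ α β γ, R α (PropForm.conj β γ) ↔ R α (PropForm.impl β γ))
    (hR3 : ∀ α β, R α β ↔ R β α)
    (hR4 : ∀ α, R α α)
    (hR6 : ∀ α β β', R α β → Equiv β β' → R α β') :
    ∀ α β, R α β :=
  R2_incompatible_with_R6_general R hR2 hR4 hR6

end BeliefSeq
end

section
/- For every belief sequence σ, every level k and every query formula γ, the set Γ_{σ,k,γ} produced by the prioritized maxiconsistent construction is consistent (satisfiable); in particular Γ_{σ,k,γ} ⊬ ⊥, even when [[σ]] is inconsistent. -/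
namespace BeliefSeq

variable {ν : Type}

theorem satisfiable_empty : Satisfiable (∅ : Set (PropForm ν)) :=
  ⟨fun _ => true, by simp⟩

theorem Satisfiable.not_entails_fls {Γ : Set (PropForm ν)} (h : Satisfiable Γ) :
    ¬ Entails Γ PropForm.fls := by
  obtain ⟨v, hv⟩ := h
  intro hfls
  simpa [PropForm.eval] using hfls v hv

theorem satisfiable_insert_of_not_entails_neg {Γ : Set (PropForm ν)} {δ : PropForm ν}
    (h : ¬ Entails Γ (PropForm.neg δ)) : Satisfiable (insert δ Γ) := by
  obtain ⟨v, hΓ, hδ⟩ :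
      ∃ v, (∀ φ ∈ Γ, φ.eval v = true) ∧ ¬ (PropForm.neg δ).eval v = true := by
    simpa [Entails] using h
  refine ⟨v, Set.forall_mem_insert.2 ⟨?_, hΓ⟩⟩
  simpa [PropForm.eval] using hδ

-- The instance is implicit so that it unifies with the classical one chosen inside `Gamma`.
theorem Satisfiable.ite_insert {Γ : Set (PropForm ν)} {δ : PropForm ν} {skip : Prop}
    {_ : Decidable skip} (hΓ : Satisfiable Γ) (h : ¬ skip → ¬ Entails Γ (PropForm.neg δ)) :
    Satisfiable (if skip then Γ else insert δ Γ) := by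
  split_ifs with hskip
  · exact hΓ
  · exact satisfiable_insert_of_not_entails_neg (h hskip)

theorem Satisfiable.foldl {f : Set (PropForm ν) → PropForm ν → Set (PropForm ν)}
    (hf : ∀ Γ δ, Satisfiable Γ → Satisfiable (f Γ δ)) (l : List (PropForm ν))
    {Γ : Set (PropForm ν)} (hΓ : Satisfiable Γ) : Satisfiable (l.foldl f Γ) := by
  induction l generalizing Γ with
  | nil => exact hΓ
  | cons δ l ih => exact ih (hf Γ δ hΓ)

/-- for every σ, k, γ, the prioritized maxiconsistent set
`Γ_{⟨σ,k,γ⟩}` is consistent (satisfiable); in particular it does not entail ⊥,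
even when `[[σ]]` is inconsistent. -/
theorem Gamma_consistent {ν : Type} (σ : List (PropForm ν)) (k : ℕ)
    (γ : PropForm ν) :
    Satisfiable (Gamma σ k γ) ∧ ¬ Entails (Gamma σ k γ) PropForm.fls := by
  have hsat : Satisfiable (Gamma σ k γ) :=
    Satisfiable.foldl (fun _ _ hΓ => hΓ.ite_insert fun hskip => (not_or.1 hskip).1) _
      satisfiable_empty
  exact ⟨hsat, hsat.not_entails_fls⟩

end BeliefSeq
end

section
/- The inference procedure is monotonic in the degree of relevance k: for all levels k ≤ k', Γ_{σ,k,γ} ⊆ Γ_{σ,k',γ}; consequently σ ⊢_k γ implies σ ⊢_{k'} γ, and hence C_k(σ) ⊆ C_{k'}(σ). -/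
/-! The priority order lists the entries of `σ` by nondecreasing relevance degree, so the
passes for `k` and for `k' ≥ k` make the same decisions on every entry of degree at most `k`.
After that, the pass for `k` skips every remaining entry, while the pass for `k'` can only
add to the set it has built. -/

namespace BeliefSeq

variable {ν : Type}

section GreedyStep

variable {α β : Type*} [LinearOrder β]

open Classical in
noncomputable def greedyStep (blocked : Set α → α → Prop) (r : α → β) (t : β)
    (Γ : Set α) (a : α) : Set α :=
  if blocked Γ a ∨ t < r a then Γ else insert a Γ

variable {blocked : Set α → α → Prop} {r : α → β}

theorem subset_foldl_greedyStep (t : β) (L : List α) (Γ : Set α) :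
    Γ ⊆ L.foldl (greedyStep blocked r t) Γ := by
  induction L generalizing Γ with
  | nil => exact subset_rfl
  | cons a L ih =>
    refine subset_trans ?_ (ih _)
    unfold greedyStep
    split_ifs
    exacts [subset_rfl, Set.subset_insert a Γ]

theorem foldl_greedyStep_of_forall_lt {t : β} {L : List α} (hL : ∀ a ∈ L, t < r a)
    (Γ : Set α) : L.foldl (greedyStep blocked r t) Γ = Γ := by
  induction L with
  | nil => rfl
  | cons a L ih =>
    rw [List.foldl_cons, greedyStep, if_pos (Or.inr (hL a List.mem_cons_self))]
    exact ih fun b hb => hL b (List.mem_cons_of_mem a hb)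

theorem greedyStep_eq_of_not_lt {t t' : β} (htt' : t ≤ t') {a : α} (ha : ¬t < r a)
    (Γ : Set α) : greedyStep blocked r t Γ a = greedyStep blocked r t' Γ a := by
  have ha' : ¬t' < r a := not_lt.mpr ((not_lt.mp ha).trans htt')
  unfold greedyStep
  congr 1
  simp only [ha, ha', or_false]

theorem foldl_greedyStep_mono {t t' : β} (htt' : t ≤ t') {L : List α}
    (hL : L.Pairwise fun a b => r a ≤ r b) (Γ : Set α) :
    L.foldl (greedyStep blocked r t) Γ ⊆ L.foldl (greedyStep blocked r t') Γ := by
  induction L generalizing Γ with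
  | nil => exact subset_rfl
  | cons a L ih =>
    obtain ⟨ha, hL⟩ := List.pairwise_cons.mp hL
    by_cases hat : t < r a
    · have hall : ∀ b ∈ a :: L, t < r b := by
        rintro b (_ | ⟨_, hb⟩)
        exacts [hat, hat.trans_le (ha b hb)]
      rw [foldl_greedyStep_of_forall_lt hall]
      exact subset_foldl_greedyStep t' _ Γ
    · rw [List.foldl_cons, List.foldl_cons, greedyStep_eq_of_not_lt htt' hat]
      exact ih hL _

end GreedyStep

theorem priority_trans (γ : PropForm ν) (σ : List (PropForm ν)) (a b c : ℕ × PropForm ν)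
    (hab : priority γ σ a b) (hbc : priority γ σ b c) : priority γ σ a c := by
  simp only [priority, decide_eq_true_eq] at hab hbc ⊢
  rcases hab with hab | ⟨hab, hba⟩ <;> rcases hbc with hbc | ⟨hbc, hcb⟩
  · exact Or.inl (hab.trans hbc)
  · exact Or.inl (hbc ▸ hab)
  · exact Or.inl (hab ▸ hbc)
  · exact Or.inr ⟨hab.trans hbc, hcb.trans hba⟩

theorem priority_total (γ : PropForm ν) (σ : List (PropForm ν)) (a b : ℕ × PropForm ν) :
    (priority γ σ a b || priority γ σ b a) = true := by
  simp only [priority, Bool.or_eq_true, decide_eq_true_eq]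
  rcases lt_trichotomy (relDeg γ a.2 σ) (relDeg γ b.2 σ) with hab | hab | hba
  · exact Or.inl (Or.inl hab)
  · rcases le_total b.1 a.1 with hba | hab'
    · exact Or.inl (Or.inr ⟨hab, hba⟩)
    · exact Or.inr (Or.inr ⟨hab.symm, hab'⟩)
  · exact Or.inr (Or.inl hba)

theorem relDeg_le_of_priority {γ : PropForm ν} {σ : List (PropForm ν)} {a b : ℕ × PropForm ν}
    (hab : priority γ σ a b) : relDeg γ a.2 σ ≤ relDeg γ b.2 σ := by
  simp only [priority, decide_eq_true_eq] at hab
  rcases hab with hab | ⟨hab, -⟩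
  exacts [hab.le, hab.le]

theorem pairwise_relDeg_le_prioritized (γ : PropForm ν) (σ : List (PropForm ν)) :
    (prioritized γ σ).Pairwise fun a b => relDeg γ a σ ≤ relDeg γ b σ :=
  List.pairwise_map.mpr <|
    (List.pairwise_mergeSort (priority_trans γ σ) (priority_total γ σ) _).imp
      relDeg_le_of_priority

theorem Gamma_eq_foldl_greedyStep (σ : List (PropForm ν)) (k : ℕ) (γ : PropForm ν) :
    Gamma σ k γ = (prioritized γ σ).foldl
      (greedyStep (fun Γ δ => Entails Γ δ.neg) (relDeg γ · σ) (k : ℕ∞)) ∅ :=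
  rfl

theorem Gamma_mono {σ : List (PropForm ν)} {k k' : ℕ} (h : k ≤ k') (γ : PropForm ν) :
    Gamma σ k γ ⊆ Gamma σ k' γ := by
  rw [Gamma_eq_foldl_greedyStep, Gamma_eq_foldl_greedyStep]
  exact foldl_greedyStep_mono (Nat.cast_le.mpr h) (pairwise_relDeg_le_prioritized γ σ) ∅

theorem Entails.mono {Γ Δ : Set (PropForm ν)} {γ : PropForm ν} (hΓΔ : Γ ⊆ Δ)
    (hΓ : Entails Γ γ) : Entails Δ γ :=
  fun v hv => hΓ v fun φ hφ => hv φ (hΓΔ hφ)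

/-- the inference procedure is monotonic in the degree of
relevance k: for `k ≤ k'`, `Γ_{⟨σ,k,γ⟩} ⊆ Γ_{⟨σ,k',γ⟩}`, hence `σ ⊢_k γ`
implies `σ ⊢_{k'} γ`, and `C_k(σ) ⊆ C_{k'}(σ)`. -/
theorem inference_monotone_in_k {ν : Type} (σ : List (PropForm ν))
    (k k' : ℕ) (h : k ≤ k') :
    (∀ γ : PropForm ν,
      Gamma σ k γ ⊆ Gamma σ k' γ ∧ (InferK σ k γ → InferK σ k' γ)) ∧
    Ck σ k ⊆ Ck σ k' := by
  have infer_mono (γ : PropForm ν) : InferK σ k γ → InferK σ k' γ :=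
    Entails.mono (Gamma_mono h γ)
  exact ⟨fun γ => ⟨Gamma_mono h γ, infer_mono γ⟩, infer_mono⟩

end BeliefSeq
end
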